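/- Let g, h : A* → A* be two marked morphisms with g ≠ h. Let u, v ∈ A* be words and s, r, q positive integers such that g(aˢ b u) = h(aˢ b u) and g(aʳ b v) = h(a^q b v). Then s = r = q. -/

import Mathlib

/-- The two-letter alphabet `A = {a, b}`. -/
inductive Ltr : Type
  | a : Ltr
  | b : Ltr
  deriving DecidableEq

/-- Apply a morphism (given by the images of the letters) to a word. -/
def mapp {α σ : Type*} (g : α → List σ) (w : List α) : List σ :=
  (w.map g).flatten

/-- The `n`-th power `tⁿ` of a word `t`. -/
def npow {σ : Type*} (t : List σ) (n : ℕ) : List σ :=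
  (List.replicate n t).flatten

/-- A binary morphism is periodic if all images of letters are powers of a common word. -/
def Periodic {σ : Type*} (g : Ltr → List σ) : Prop :=
  ∃ t : List σ, ∀ x : Ltr, ∃ n : ℕ, g x = npow t n

/-- The equality set `E(g,h)`. -/
def EqSet {σ : Type*} (g h : Ltr → List σ) : Set (List Ltr) :=
  {u | mapp g u = mapp h u}

/-- `u` is a minimal element of `E(g,h)`: nonempty, in `E(g,h)`, and not a product of two
nonempty elements of `E(g,h)`. -/
def MinEl {σ : Type*} (g h : Ltr → List σ) (u : List Ltr) : Prop :=
  u ≠ [] ∧ u ∈ EqSet g h ∧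
    ∀ v w : List Ltr, v ≠ [] → w ≠ [] → v ∈ EqSet g h → w ∈ EqSet g h → u ≠ v ++ w

/-- The submonoid of the free monoid generated by a set `S` of words. -/
def gen {α : Type*} (S : Set (List α)) : Set (List α) :=
  {u | ∃ l : List (List α), (∀ v ∈ l, v ∈ S) ∧ u = l.flatten}

/-- A binary morphism is marked if the images of the two letters are nonempty and
begin with different letters. -/
def Marked {σ : Type*} (g : Ltr → List σ) : Prop :=
  g Ltr.a ≠ [] ∧ g Ltr.b ≠ [] ∧ (g Ltr.a).head? ≠ (g Ltr.b).head?

open Classical in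
/-- Longest common prefix of two words. -/
noncomputable def lcp {σ : Type*} : List σ → List σ → List σ
  | x :: xs, y :: ys => if x = y then x :: lcp xs ys else []
  | _, _ => []

/-- `z_h`: the longest common prefix of `h(ab)` and `h(ba)`. -/
noncomputable def zh {σ : Type*} (h : Ltr → List σ) : List σ :=
  lcp (h Ltr.a ++ h Ltr.b) (h Ltr.b ++ h Ltr.a)

/-- `z̄_h`: the longest common suffix of `h(ab)` and `h(ba)`. -/
noncomputable def zbar {σ : Type*} (h : Ltr → List σ) : List σ :=
  (lcp (h Ltr.a ++ h Ltr.b).reverse ((h Ltr.b ++ h Ltr.a).reverse)).reverse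

/-- Componentwise concatenation in `Δ* × Δ*`. -/
def pprod {α : Type*} (p q : List α × List α) : List α × List α :=
  (p.1 ++ q.1, p.2 ++ q.2)

/-- The coincidence set `I(g,h) = {(u,v) | g(u) = h(v)}`. -/
def CoinSet {α σ : Type*} (g h : α → List σ) : Set (List α × List α) :=
  {p | mapp g p.1 = mapp h p.2}

/-- Minimal elements of the coincidence set: elements other than `(ε,ε)` that are not
a product of two elements of `I(g,h) \ {(ε,ε)}`. -/
def MinCoin {α σ : Type*} (g h : α → List σ) (p : List α × List α) : Prop :=
  p ≠ ([], []) ∧ p ∈ CoinSet g h ∧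
    ¬ ∃ q r : List α × List α, q ≠ ([], []) ∧ r ≠ ([], []) ∧
      q ∈ CoinSet g h ∧ r ∈ CoinSet g h ∧ p = pprod q r

/-- `(e,f)` is a block of `(g,h)`: nonempty words with `z_h·g(e) = h(f)·z_h`, minimal
with this property. -/
def MinBlock {σ : Type*} (g h : Ltr → List σ) (e f : List Ltr) : Prop :=
  e ≠ [] ∧ f ≠ [] ∧ zh h ++ mapp g e = mapp h f ++ zh h ∧
    ∀ u v : List Ltr, u <+: e → v <+: f →
      zh h ++ mapp g u = mapp h v ++ zh h → (u = [] ∧ v = []) ∨ (u = e ∧ v = f)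

/-- `e` is a nonempty word with `z_h·g(e) = h(e)·z_h`, minimal with this property. -/
def MinEqBlock {σ : Type*} (g h : Ltr → List σ) (e : List Ltr) : Prop :=
  e ≠ [] ∧ zh h ++ mapp g e = mapp h e ++ zh h ∧
    ∀ e₁ : List Ltr, e₁ <+: e → zh h ++ mapp g e₁ = mapp h e₁ ++ zh h →
      e₁ = [] ∨ e₁ = e

/-- The binary morphism sending `a ↦ x` and `b ↦ y`. -/
def two {σ : Type*} (x y : List σ) : Ltr → List σ
  | Ltr.a => x
  | Ltr.b => y

/-- A counterexample: the minimal generating set of `E(g,h)` has at least two elements,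
`g` is marked, `h` is not marked, `|g(a)| > |h(a)|` and `|g(b)| < |h(b)|`. -/
def Counterexample {σ : Type*} (g h : Ltr → List σ) : Prop :=
  (∃ α β : List Ltr, MinEl g h α ∧ MinEl g h β ∧ α ≠ β) ∧
  Marked g ∧ ¬ Marked h ∧
  (h Ltr.a).length < (g Ltr.a).length ∧ (g Ltr.b).length < (h Ltr.b).length

/-!
Every coincidence `g x = h y` factors into minimal coincidences, and since `g` and `h` are
marked, a minimal coincidence `(p₁, p₂)` is determined by the first letter of `p₁`. So there are
at most two of them, `A` starting with `a` and possibly one `B` starting with `b`, and both given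
coincidences start with `A`. If `b` occurs in `A₁`, its first position is both `s` and `r`;
if it occurs in `A₂`, it is both `s` and `q`. If it occurs in exactly one of them, the numbers of
`a`s and `b`s in the two factorizations over `{A, B}` give a linear system forcing `r = q`.
If it occurs in neither, `A = (aᵏ, aᵐ)`; peeling copies of `A` off `aˢbu` gives `sm = sk`, so
`|g a| = |h a|`, and comparing lengths in `g(aˢbu) = h(aˢbu)` then yields `g = h`.
-/

open List

theorem List.exists_eq_append_cons_of_not_prefix {α : Type*} :
    ∀ {l₁ l₂ : List α}, ¬ l₁ <+: l₂ → ¬ l₂ <+: l₁ →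
      ∃ w c d t₁ t₂, c ≠ d ∧ l₁ = w ++ c :: t₁ ∧ l₂ = w ++ d :: t₂
  | [], _, h, _ => absurd nil_prefix h
  | _, [], _, h => absurd nil_prefix h
  | c :: t₁, d :: t₂, h₁, h₂ => by
    by_cases hcd : c = d
    · subst hcd
      obtain ⟨w, c', d', t₁', t₂', hne, rfl, rfl⟩ := exists_eq_append_cons_of_not_prefix
        (fun h => h₁ (cons_prefix_cons.2 ⟨rfl, h⟩)) (fun h => h₂ (cons_prefix_cons.2 ⟨rfl, h⟩))
      exact ⟨c :: w, c', d', t₁', t₂', hne, rfl, rfl⟩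
    · exact ⟨[], c, d, t₁, t₂, hcd, rfl, rfl⟩

theorem List.IsPrefix.head?_eq {α : Type*} {l₁ l₂ : List α} (h : l₁ <+: l₂) (hne : l₁ ≠ []) :
    l₁.head? = l₂.head? := by
  obtain ⟨t, rfl⟩ := h
  exact (head?_append_of_ne_nil l₁ hne).symm

section Mapp

variable {α σ : Type*}

@[simp] theorem mapp_nil (g : α → List σ) : mapp g [] = [] := rfl

@[simp] theorem mapp_cons (g : α → List σ) (c : α) (w : List α) :
    mapp g (c :: w) = g c ++ mapp g w := by
  simp [mapp]

@[simp] theorem mapp_append (g : α → List σ) (w₁ w₂ : List α) :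
    mapp g (w₁ ++ w₂) = mapp g w₁ ++ mapp g w₂ := by
  simp [mapp]

theorem mapp_prefix_mapp {g : α → List σ} {x y : List α} (h : x <+: y) : mapp g x <+: mapp g y := by
  obtain ⟨t, rfl⟩ := h
  simp

theorem length_mapp (g : Ltr → List σ) (w : List Ltr) :
    (mapp g w).length = w.count Ltr.a * (g Ltr.a).length + w.count Ltr.b * (g Ltr.b).length := by
  induction w with
  | nil => simp
  | cons c w ih => cases c <;> simp [ih] <;> ring

theorem forall_mem_eq_of_mapp_eq {g h : α → List σ} (hlen : ∀ c, (g c).length = (h c).length) :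
    ∀ {w : List α}, mapp g w = mapp h w → ∀ c ∈ w, g c = h c
  | [], _ => by simp
  | c :: w, hw => by
    obtain ⟨hc, hw⟩ := append_inj (by simpa using hw) (hlen c)
    simpa [hc] using forall_mem_eq_of_mapp_eq hlen hw

theorem eq_of_mapp_eq_of_length_eq {g h : Ltr → List σ} {w : List Ltr}
    (hlen : (g Ltr.a).length = (h Ltr.a).length) (hw : mapp g w = mapp h w) (ha : Ltr.a ∈ w)
    (hb : Ltr.b ∈ w) : g = h := by
  have hlen_b : (g Ltr.b).length = (h Ltr.b).length := by
    have := congrArg length hw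
    rw [length_mapp, length_mapp, hlen, add_right_inj] at this
    exact Nat.eq_of_mul_eq_mul_left (count_pos_iff.2 hb) this
  have hlen : ∀ c, (g c).length = (h c).length := by
    intro c
    cases c
    exacts [hlen, hlen_b]
  funext c
  cases c
  exacts [forall_mem_eq_of_mapp_eq hlen hw _ ha, forall_mem_eq_of_mapp_eq hlen hw _ hb]

end Mapp

namespace Marked

variable {σ : Type*} {g : Ltr → List σ}

theorem ne_nil (hg : Marked g) (c : Ltr) : g c ≠ [] := by
  cases c
  exacts [hg.1, hg.2.1]

theorem eq_of_head?_eq (hg : Marked g) {c d : Ltr} (h : (g c).head? = (g d).head?) : c = d := by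
  cases c <;> cases d
  all_goals first | rfl | exact absurd h hg.2.2 | exact absurd h.symm hg.2.2

theorem head?_mapp (hg : Marked g) {w : List Ltr} {c : Ltr} (hw : w.head? = some c) :
    (mapp g w).head? = (g c).head? := by
  obtain ⟨t, rfl⟩ := head?_eq_some_iff.1 hw
  rw [mapp_cons, head?_append_of_ne_nil _ (hg.ne_nil c)]

theorem mapp_eq_nil_iff (hg : Marked g) {w : List Ltr} : mapp g w = [] ↔ w = [] := by
  cases w <;> simp [hg.ne_nil]

theorem mapp_prefix_mapp_iff (hg : Marked g) :
    ∀ {x y : List Ltr}, mapp g x <+: mapp g y ↔ x <+: y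
  | [], _ => by simp
  | c :: x, [] => by simp [hg.ne_nil]
  | c :: x, d :: y => by
    refine ⟨fun h => ?_, mapp_prefix_mapp⟩
    obtain rfl : c = d := hg.eq_of_head?_eq <| by
      rw [← hg.head?_mapp (w := c :: x) rfl, ← hg.head?_mapp (w := d :: y) rfl]
      exact h.head?_eq (by simp [hg.ne_nil])
    rw [mapp_cons, mapp_cons, prefix_append_right_inj, hg.mapp_prefix_mapp_iff] at h
    exact cons_prefix_cons.2 ⟨rfl, h⟩

theorem prefix_mapp_of_diverge (hg : Marked g) {z : List σ} {w t₁ t₂ : List Ltr} {c d : Ltr}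
    (hcd : c ≠ d) (h₁ : z <+: mapp g (w ++ c :: t₁)) (h₂ : z <+: mapp g (w ++ d :: t₂)) :
    z <+: mapp g w := by
  rw [mapp_append, mapp_cons] at h₁ h₂
  rcases prefix_or_prefix_of_prefix h₁ (prefix_append (mapp g w) _) with hz | ⟨r, rfl⟩
  · exact hz
  rw [prefix_append_right_inj] at h₁ h₂
  rcases eq_or_ne r [] with rfl | hr
  · simp
  exact absurd (hg.eq_of_head?_eq <| by
    rw [← head?_append_of_ne_nil _ (hg.ne_nil c), ← head?_append_of_ne_nil _ (hg.ne_nil d),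
      ← h₁.head?_eq hr, h₂.head?_eq hr]) hcd

end Marked

section Coincidence

variable {α σ : Type*} {g h : α → List σ}

theorem pprod_mem_coinSet_iff {x y : List α × List α} (hx : x ∈ CoinSet g h) :
    pprod x y ∈ CoinSet g h ↔ y ∈ CoinSet g h := by
  have hx : mapp g x.1 = mapp h x.2 := hx
  simp [CoinSet, pprod, hx]

theorem MinCoin.eq_or_eq_of_prefix {p t : List α × List α} (hp : MinCoin g h p)
    (ht : t ∈ CoinSet g h) (h₁ : t.1 <+: p.1) (h₂ : t.2 <+: p.2) : t = ([], []) ∨ t = p := by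
  obtain ⟨r₁, hr₁⟩ := h₁
  obtain ⟨r₂, hr₂⟩ := h₂
  have hpt : p = pprod t (r₁, r₂) := Prod.ext hr₁.symm hr₂.symm
  by_contra! hne
  refine hp.2.2 ⟨t, (r₁, r₂), hne.1, fun hr => hne.2 ?_, ht, ?_, hpt⟩
  · rw [hpt, hr]
    simp [pprod]
  · rw [← pprod_mem_coinSet_iff ht, ← hpt]
    exact hp.2.1

def MinCoinFactorization (g h : α → List σ) (L : List (List α × List α))
    (w : List α × List α) : Prop :=
  (∀ p ∈ L, MinCoin g h p) ∧ (L.map Prod.fst).flatten = w.1 ∧ (L.map Prod.snd).flatten = w.2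

theorem exists_minCoinFactorization {w : List α × List α} (hw : w ∈ CoinSet g h) :
    ∃ L, MinCoinFactorization g h L w := by
  induction hn : w.1.length + w.2.length using Nat.strong_induction_on generalizing w with
  | _ n ih =>
  by_cases h0 : w = ([], [])
  · exact ⟨[], by simp [MinCoinFactorization, h0]⟩
  by_cases hmin : MinCoin g h w
  · exact ⟨[w], by simp [MinCoinFactorization, hmin]⟩
  obtain ⟨⟨x₁, x₂⟩, ⟨y₁, y₂⟩, hx0, hy0, hx, hy, rfl⟩ : ∃ x y : List α × List α,
      x ≠ ([], []) ∧ y ≠ ([], []) ∧ x ∈ CoinSet g h ∧ y ∈ CoinSet g h ∧ w = pprod x y := by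
    simpa [MinCoin, h0, hw] using hmin
  have hxlen : 0 < x₁.length + x₂.length := by
    by_contra! hx
    simp_all
  have hylen : 0 < y₁.length + y₂.length := by
    by_contra! hy
    simp_all
  simp only [pprod, length_append] at hn
  obtain ⟨Lx, hLx₀, hLx₁, hLx₂⟩ := ih (x₁.length + x₂.length) (by omega) hx rfl
  obtain ⟨Ly, hLy₀, hLy₁, hLy₂⟩ := ih (y₁.length + y₂.length) (by omega) hy rfl
  refine ⟨Lx ++ Ly, ?_, ?_, ?_⟩
  · simp only [mem_append]
    rintro p (hp | hp)
    exacts [hLx₀ p hp, hLy₀ p hp]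
  all_goals simp_all [pprod]

end Coincidence

section MarkedPair

variable {σ : Type*} {g h : Ltr → List σ}

theorem MinCoin.fst_ne_nil (hh : Marked h) {p : List Ltr × List Ltr} (hp : MinCoin g h p) :
    p.1 ≠ [] := by
  intro h₁
  have h₂ : mapp h p.2 = [] := by rw [← (hp.2.1 : mapp g p.1 = _), h₁, mapp_nil]
  exact hp.1 (Prod.ext h₁ (hh.mapp_eq_nil_iff.1 h₂))

theorem MinCoin.eq_of_head?_eq (hg : Marked g) (hh : Marked h) {p q : List Ltr × List Ltr}
    (hp : MinCoin g h p) (hq : MinCoin g h q) (he : p.1.head? = q.1.head?) : p = q := by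
  have of_prefix : ∀ {p q : List Ltr × List Ltr}, MinCoin g h p → MinCoin g h q →
      p.1 <+: q.1 ∨ p.2 <+: q.2 → p = q := by
    intro p q hp hq hpq
    have hiff : p.1 <+: q.1 ↔ p.2 <+: q.2 := by
      rw [← hg.mapp_prefix_mapp_iff, ← hh.mapp_prefix_mapp_iff,
        (hp.2.1 : mapp g p.1 = _), (hq.2.1 : mapp g q.1 = _)]
    have h₁ : p.1 <+: q.1 := hpq.elim id hiff.2
    exact (hq.eq_or_eq_of_prefix hp.2.1 h₁ (hiff.1 h₁)).resolve_left hp.1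
  by_cases hpq : p.1 <+: q.1 ∨ p.2 <+: q.2
  · exact of_prefix hp hq hpq
  by_cases hqp : q.1 <+: p.1 ∨ q.2 <+: p.2
  · exact (of_prefix hq hp hqp).symm
  push Not at hpq hqp
  -- both components diverge; the images of the common parts then agree
  obtain ⟨w₁, c, d, t₁, t₁', hcd, hp₁, hq₁⟩ := exists_eq_append_cons_of_not_prefix hpq.1 hqp.1
  obtain ⟨w₂, c', d', t₂, t₂', hcd', hp₂, hq₂⟩ := exists_eq_append_cons_of_not_prefix hpq.2 hqp.2
  have hpC : mapp g p.1 = mapp h p.2 := hp.2.1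
  have hqC : mapp g q.1 = mapp h q.2 := hq.2.1
  have hgh : mapp g w₁ <+: mapp h w₂ := by
    refine hh.prefix_mapp_of_diverge (t₁ := t₂) (t₂ := t₂') hcd' ?_ ?_
    · rw [← hp₂, ← hpC, hp₁]
      exact mapp_prefix_mapp (prefix_append _ _)
    · rw [← hq₂, ← hqC, hq₁]
      exact mapp_prefix_mapp (prefix_append _ _)
  have hhg : mapp h w₂ <+: mapp g w₁ := by
    refine hg.prefix_mapp_of_diverge (t₁ := t₁) (t₂ := t₁') hcd ?_ ?_
    · rw [← hp₁, hpC, hp₂]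
      exact mapp_prefix_mapp (prefix_append _ _)
    · rw [← hq₁, hqC, hq₂]
      exact mapp_prefix_mapp (prefix_append _ _)
  have hw : (w₁, w₂) ∈ CoinSet g h := hgh.eq_of_length (le_antisymm hgh.length_le hhg.length_le)
  rcases hp.eq_or_eq_of_prefix hw (by rw [hp₁]; exact prefix_append _ _)
      (by rw [hp₂]; exact prefix_append _ _) with hw0 | hwp
  · simp only [Prod.mk.injEq] at hw0
    simp [hp₁, hq₁, hw0.1, hcd] at he
  · have := congrArg (fun x => x.1.length) hwp
    simp [hp₁] at this

theorem MinCoin.eq_of_ne_of_ne (hg : Marked g) (hh : Marked h) {A p q : List Ltr × List Ltr}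
    (hA : MinCoin g h A) (hp : MinCoin g h p) (hq : MinCoin g h q) (hpA : p ≠ A) (hqA : q ≠ A) :
    p = q := by
  obtain ⟨c, tA, hA₁⟩ := exists_cons_of_ne_nil (hA.fst_ne_nil hh)
  obtain ⟨d, tp, hp₁⟩ := exists_cons_of_ne_nil (hp.fst_ne_nil hh)
  obtain ⟨e, tq, hq₁⟩ := exists_cons_of_ne_nil (hq.fst_ne_nil hh)
  have hdc : d ≠ c := fun hdc => hpA (hp.eq_of_head?_eq hg hh hA (by simp [hA₁, hp₁, hdc]))
  have hec : e ≠ c := fun hec => hqA (hq.eq_of_head?_eq hg hh hA (by simp [hA₁, hq₁, hec]))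
  refine hp.eq_of_head?_eq hg hh hq ?_
  rw [hp₁, hq₁]
  cases c <;> cases d <;> cases e <;> simp_all

theorem head?_snd_eq_head?_fst (hg : Marked g) (hh : Marked h)
    (hab : (g Ltr.a).head? = (h Ltr.a).head?) {w : List Ltr × List Ltr} (hw : w ∈ CoinSet g h) :
    w.2.head? = w.1.head? := by
  obtain ⟨_ | ⟨c, t⟩, _ | ⟨d, t'⟩⟩ := w
  · rfl
  · exact absurd (hh.mapp_eq_nil_iff.1 (Eq.symm hw)) (cons_ne_nil d t')
  · exact absurd (hg.mapp_eq_nil_iff.1 hw) (cons_ne_nil c t)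
  have hcd : (g c).head? = (h d).head? := by
    rw [← hg.head?_mapp (w := c :: t) rfl, ← hh.head?_mapp (w := d :: t') rfl]
    exact congrArg head? hw
  have hb : (g Ltr.b).head? ≠ (h Ltr.a).head? := hab ▸ hg.2.2.symm
  have hb' : (g Ltr.a).head? ≠ (h Ltr.b).head? := hab ▸ hh.2.2
  cases c <;> cases d <;> simp_all

theorem MinCoinFactorization.eq_cons (hg : Marked g) (hh : Marked h)
    {L : List (List Ltr × List Ltr)} {w A : List Ltr × List Ltr}
    (hL : MinCoinFactorization g h L w) (hw : w.1 ≠ []) (hA : MinCoin g h A)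
    (he : A.1.head? = w.1.head?) : ∃ L', L = A :: L' := by
  obtain ⟨hL₀, hL₁, -⟩ := hL
  cases L with
  | nil => simp [← hL₁] at hw
  | cons p L' =>
    have hp := hL₀ p mem_cons_self
    refine ⟨L', ?_⟩
    rw [hp.eq_of_head?_eq hg hh hA ?_]
    rw [he, ← hL₁, map_cons, flatten_cons, head?_append_of_ne_nil _ (hp.fst_ne_nil hh)]

theorem exists_minCoin_head?_eq (hh : Marked h) {w : List Ltr × List Ltr}
    (hw : w ∈ CoinSet g h) (hw₁ : w.1 ≠ []) : ∃ A, MinCoin g h A ∧ A.1.head? = w.1.head? := by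
  obtain ⟨_ | ⟨A, L⟩, hL₀, hL₁, -⟩ := exists_minCoinFactorization hw
  · simp [← hL₁] at hw₁
  have hA := hL₀ A mem_cons_self
  refine ⟨A, hA, ?_⟩
  rw [← hL₁, map_cons, flatten_cons, head?_append_of_ne_nil _ (hA.fst_ne_nil hh)]

theorem MinCoin.prefix_of_head?_eq (hg : Marked g) (hh : Marked h) {w A : List Ltr × List Ltr}
    (hA : MinCoin g h A) (hw : w ∈ CoinSet g h) (hw₁ : w.1 ≠ []) (he : A.1.head? = w.1.head?) :
    A.1 <+: w.1 ∧ A.2 <+: w.2 := by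
  obtain ⟨L, hL⟩ := exists_minCoinFactorization hw
  obtain ⟨L', rfl⟩ := hL.eq_cons hg hh hw₁ hA he
  obtain ⟨-, hL₁, hL₂⟩ := hL
  simp only [map_cons, flatten_cons] at hL₁ hL₂
  exact ⟨⟨_, hL₁⟩, ⟨_, hL₂⟩⟩

end MarkedPair

theorem List.sum_map_of_forall_eq_or_eq {β R : Type*} [BEq β] [LawfulBEq β] [CommRing R]
    {L : List β} {A B : β} (f : β → R) (hL : ∀ p ∈ L, p = A ∨ p = B) :
    (L.map f).sum = L.count A * f A + ((L.length : R) - L.count A) * f B := by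
  induction L with
  | nil => simp
  | cons p L ih =>
    have ih := ih fun q hq => hL q (mem_cons_of_mem _ hq)
    rcases eq_or_ne p A with rfl | hpA
    · simp [ih]
      ring
    · obtain rfl := (hL p mem_cons_self).resolve_left hpA
      simp [ih, hpA]
      ring

/-- `(nA, nB)` and `(mA, mB)` are both orthogonal to `(eA, eB) ≠ 0`, hence proportional. -/
theorem eq_zero_of_linear_relations {R : Type*} [CommRing R] [NoZeroDivisors R]
    {nA nB mA mB dA dB eA eB x : R} (hnA : nA ≠ 0) (heA : eA ≠ 0)
    (hne : nA * eA + nB * eB = 0) (hme : mA * eA + mB * eB = 0)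
    (hnd : nA * dA + nB * dB = 0) (hmd : mA * dA + mB * dB = x) : x = 0 := by
  have heB : eB ≠ 0 := by
    rintro rfl
    simp_all
  have hdet : nA * mB = mA * nB := by
    have : (nA * mB - mA * nB) * eB = 0 := by linear_combination nA * hme - mA * hne
    linear_combination (mul_eq_zero.1 this).resolve_right heB
  have : nA * x = 0 := by linear_combination mA * hnd - nA * hmd + dB * hdet
  exact (mul_eq_zero.1 this).resolve_left hnA

def defect (c : Ltr) (p : List Ltr × List Ltr) : ℤ := p.1.count c - p.2.count c

theorem defect_ne_zero_of_xor {c : Ltr} {p : List Ltr × List Ltr} (h : Xor (c ∈ p.1) (c ∈ p.2)) :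
    defect c p ≠ 0 := by
  rw [defect, sub_ne_zero, Ne, Nat.cast_inj]
  rcases h with ⟨h₁, h₂⟩ | ⟨h₂, h₁⟩
  · rw [count_eq_zero.2 h₂]
    exact (count_pos_iff.2 h₁).ne'
  · rw [count_eq_zero.2 h₁]
    exact (count_pos_iff.2 h₂).ne

section Counting

variable {σ : Type*} {g h : Ltr → List σ}

theorem MinCoinFactorization.defect_eq {L : List (List Ltr × List Ltr)} {w : List Ltr × List Ltr}
    (hL : MinCoinFactorization g h L w) (c : Ltr) : defect c w = (L.map (defect c)).sum := by
  obtain ⟨-, hL₁, hL₂⟩ := hL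
  rw [defect, ← hL₁, ← hL₂]
  clear hL₁ hL₂
  induction L with
  | nil => simp
  | cons p L ih =>
    simp only [map_cons, flatten_cons, count_append, Nat.cast_add, sum_cons, ← ih, defect]
    ring

theorem defect_eq_zero_of_defect_ne_zero (hg : Marked g) (hh : Marked h)
    {A w w' : List Ltr × List Ltr} (hA : MinCoin g h A) (hAb : defect Ltr.b A ≠ 0)
    (hw : w ∈ CoinSet g h) (hw₁ : w.1 ≠ []) (hAw : A.1.head? = w.1.head?)
    (hwa : defect Ltr.a w = 0) (hwb : defect Ltr.b w = 0)
    (hw' : w' ∈ CoinSet g h) (hw'b : defect Ltr.b w' = 0) : defect Ltr.a w' = 0 := by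
  obtain ⟨L, hL⟩ := exists_minCoinFactorization hw
  obtain ⟨L', hL'⟩ := exists_minCoinFactorization hw'
  obtain ⟨L₀, rfl⟩ := hL.eq_cons hg hh hw₁ hA hAw
  have hmin : ∀ p ∈ (A :: L₀) ++ L', MinCoin g h p := by
    simp only [mem_append]
    rintro p (hp | hp)
    exacts [hL.1 p hp, hL'.1 p hp]
  obtain ⟨B, hB⟩ : ∃ B, ∀ p ∈ (A :: L₀) ++ L', p = A ∨ p = B := by
    by_cases hex : ∃ B ∈ (A :: L₀) ++ L', B ≠ A
    · obtain ⟨B, hBmem, hBA⟩ := hex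
      exact ⟨B, fun p hp => or_iff_not_imp_left.2 fun hpA =>
        hA.eq_of_ne_of_ne hg hh (hmin p hp) (hmin B hBmem) hpA hBA⟩
    · push Not at hex
      exact ⟨A, fun p hp => Or.inl (hex p hp)⟩
  have hdef : ∀ {L w}, MinCoinFactorization g h L w → (∀ p ∈ L, p = A ∨ p = B) → ∀ c,
      defect c w = L.count A * defect c A + ((L.length : ℤ) - L.count A) * defect c B :=
    fun hL hAB c => by rw [hL.defect_eq, sum_map_of_forall_eq_or_eq _ hAB]
  have hLAB := hdef hL fun p hp => hB p (mem_append_left _ hp)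
  have hL'AB := hdef hL' fun p hp => hB p (mem_append_right _ hp)
  refine eq_zero_of_linear_relations ?_ hAb ((hLAB Ltr.b).symm.trans hwb)
    ((hL'AB Ltr.b).symm.trans hw'b) ((hLAB Ltr.a).symm.trans hwa) (hL'AB Ltr.a).symm
  exact_mod_cast (count_pos_iff.2 mem_cons_self).ne'

end Counting

section Replicate

variable {α : Type*} {a b : α}

theorem eq_of_mem_of_prefix_replicate_append [DecidableEq α] (hab : a ≠ b) {x u v : List α}
    {s r : ℕ} (hb : b ∈ x) (hs : x <+: replicate s a ++ b :: u)
    (hr : x <+: replicate r a ++ b :: v) : s = r := by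
  have idxOf_eq : ∀ {n w}, x <+: replicate n a ++ b :: w → x.idxOf b = n := by
    rintro n w ⟨t, ht⟩
    have := congrArg (idxOf b) ht
    rwa [idxOf_append_of_mem hb, idxOf_append_of_notMem (by simp [hab.symm]), idxOf_cons_self,
      length_replicate, add_zero] at this
  exact (idxOf_eq hs).symm.trans (idxOf_eq hr)

theorem replicate_append_eq_replicate_append_cons (hab : a ≠ b) {k x : ℕ} {t u : List α}
    (h : replicate k a ++ t = replicate x a ++ b :: u) :
    k ≤ x ∧ t = replicate (x - k) a ++ b :: u := by
  rcases le_or_gt k x with hkx | hxk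
  · obtain ⟨n, rfl⟩ := Nat.exists_eq_add_of_le hkx
    rw [replicate_add, append_assoc] at h
    exact ⟨hkx, by rw [Nat.add_sub_cancel_left]; exact append_cancel_left h⟩
  · obtain ⟨n, rfl⟩ := Nat.exists_eq_add_of_lt hxk
    rw [add_assoc, replicate_add, append_assoc] at h
    simp [replicate_succ, hab] at h

end Replicate

section Pure

variable {σ : Type*} {g h : Ltr → List σ}

theorem mul_eq_mul_of_minCoin_replicate (hg : Marked g) (hh : Marked h)
    (hab : (g Ltr.a).head? = (h Ltr.a).head?) {k m : ℕ}
    (hA : MinCoin g h (replicate k Ltr.a, replicate m Ltr.a)) (x y : ℕ) (u₁ u₂ : List Ltr)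
    (hw : (replicate x Ltr.a ++ Ltr.b :: u₁, replicate y Ltr.a ++ Ltr.b :: u₂) ∈ CoinSet g h) :
    x * m = y * k := by
  induction x using Nat.strong_induction_on generalizing y u₁ u₂ with
  | _ x ih =>
  have hhead := head?_snd_eq_head?_fst hg hh hab hw
  rcases Nat.eq_zero_or_pos x with rfl | hx
  · rcases Nat.eq_zero_or_pos y with rfl | hy
    · simp
    · simp [head?_replicate, hy.ne'] at hhead
  rcases Nat.eq_zero_or_pos y with rfl | hy
  · simp [head?_replicate, hx.ne'] at hhead
  have hk : 0 < k := Nat.pos_of_ne_zero (by simpa using hA.fst_ne_nil hh)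
  obtain ⟨⟨t₁, ht₁⟩, ⟨t₂, ht₂⟩⟩ := hA.prefix_of_head?_eq hg hh hw (by simp)
    (by simp [head?_replicate, hk.ne', hx.ne'])
  have hrest : (t₁, t₂) ∈ CoinSet g h :=
    (pprod_mem_coinSet_iff hA.2.1).1 (by rwa [show pprod _ (t₁, t₂) = _ from Prod.ext ht₁ ht₂])
  obtain ⟨hkx, rfl⟩ := replicate_append_eq_replicate_append_cons (by decide) ht₁
  obtain ⟨hmy, rfl⟩ := replicate_append_eq_replicate_append_cons (by decide) ht₂
  have := ih (x - k) (by omega) (y - m) u₁ u₂ hrest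
  zify [hkx, hmy] at this ⊢
  linear_combination this

theorem eq_of_minCoin_of_not_mem (hg : Marked g) (hh : Marked h)
    (hab : (g Ltr.a).head? = (h Ltr.a).head?) {A : List Ltr × List Ltr} {s : ℕ} {u : List Ltr}
    (hA : MinCoin g h A) (hb₁ : Ltr.b ∉ A.1) (hb₂ : Ltr.b ∉ A.2) (hs : 0 < s)
    (hw : mapp g (replicate s Ltr.a ++ Ltr.b :: u) = mapp h (replicate s Ltr.a ++ Ltr.b :: u)) :
    g = h := by
  have hrep : ∀ {x : List Ltr}, Ltr.b ∉ x → x = replicate x.length Ltr.a := fun hx =>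
    eq_replicate_iff.2 ⟨rfl, fun c hc => by cases c; rfl; exact absurd hc hx⟩
  have hA' : MinCoin g h (replicate A.1.length Ltr.a, replicate A.2.length Ltr.a) := by
    rwa [← hrep hb₁, ← hrep hb₂]
  generalize A.1.length = k, A.2.length = m at hA'
  have hk : 0 < k := Nat.pos_of_ne_zero (by simpa using hA'.fst_ne_nil hh)
  obtain rfl : m = k := Nat.eq_of_mul_eq_mul_left hs
    (mul_eq_mul_of_minCoin_replicate hg hh hab hA' s s u u hw)
  have hlen : (g Ltr.a).length = (h Ltr.a).length := by
    simpa [length_mapp, count_replicate, hk.ne'] using congrArg length hA'.2.1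
  exact eq_of_mapp_eq_of_length_eq hlen hw (by simp [hs.ne']) (by simp)

end Pure

theorem stmt_16_general (g h : Ltr → List Ltr) (hg : Marked g) (hh : Marked h) (hgh : g ≠ h)
    (u v : List Ltr) (s r q : ℕ) (hs : 0 < s) (hr : 0 < r)
    (e1 : mapp g (List.replicate s Ltr.a ++ Ltr.b :: u) =
          mapp h (List.replicate s Ltr.a ++ Ltr.b :: u))
    (e2 : mapp g (List.replicate r Ltr.a ++ Ltr.b :: v) =
          mapp h (List.replicate q Ltr.a ++ Ltr.b :: v)) :
    s = r ∧ r = q := by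
  have hsa : (replicate s Ltr.a ++ Ltr.b :: u).head? = some Ltr.a := by
    simp [head?_replicate, hs.ne']
  have hra : (replicate r Ltr.a ++ Ltr.b :: v).head? = some Ltr.a := by
    simp [head?_replicate, hr.ne']
  have hw : (replicate s Ltr.a ++ Ltr.b :: u, replicate s Ltr.a ++ Ltr.b :: u) ∈ CoinSet g h := e1
  have hw' : (replicate r Ltr.a ++ Ltr.b :: v, replicate q Ltr.a ++ Ltr.b :: v) ∈ CoinSet g h := e2
  have hab : (g Ltr.a).head? = (h Ltr.a).head? := by
    rw [← hg.head?_mapp hsa, ← hh.head?_mapp hsa, e1]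
  obtain ⟨A, hA, hAs⟩ := exists_minCoin_head?_eq hh hw (by simp)
  obtain ⟨hA₁s, hA₂s⟩ := hA.prefix_of_head?_eq hg hh hw (by simp) hAs
  obtain ⟨hA₁r, hA₂q⟩ :=
    hA.prefix_of_head?_eq hg hh hw' (by simp) (hAs.trans (hsa.trans hra.symm))
  have hsr : Ltr.b ∈ A.1 → s = r := fun hb =>
    eq_of_mem_of_prefix_replicate_append (by decide) hb hA₁s hA₁r
  have hsq : Ltr.b ∈ A.2 → s = q := fun hb =>
    eq_of_mem_of_prefix_replicate_append (by decide) hb hA₂s hA₂q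
  have hrq : Xor (Ltr.b ∈ A.1) (Ltr.b ∈ A.2) → r = q := fun hb => by
    have := defect_eq_zero_of_defect_ne_zero hg hh hA (defect_ne_zero_of_xor hb) hw (by simp) hAs
      (by simp [defect]) (by simp [defect]) hw' (by simp [defect, count_replicate])
    simpa [defect, count_replicate, sub_eq_zero] using this
  by_cases hb₁ : Ltr.b ∈ A.1 <;> by_cases hb₂ : Ltr.b ∈ A.2
  · exact ⟨hsr hb₁, (hsr hb₁).symm.trans (hsq hb₂)⟩
  · exact ⟨hsr hb₁, hrq (Or.inl ⟨hb₁, hb₂⟩)⟩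
  · exact ⟨(hsq hb₂).trans (hrq (Or.inr ⟨hb₂, hb₁⟩)).symm, hrq (Or.inr ⟨hb₂, hb₁⟩)⟩
  · exact absurd (eq_of_minCoin_of_not_mem hg hh hab hA hb₁ hb₂ hs e1) hgh

/-- If `g ≠ h` are marked morphisms of `A*` into itself with
`g(aˢbu) = h(aˢbu)` and `g(aʳbv) = h(a^q b v)` for positive `s, r, q`, then `s = r = q`. -/
theorem stmt_16 (g h : Ltr → List Ltr) (hg : Marked g) (hh : Marked h) (hgh : g ≠ h)
    (u v : List Ltr) (s r q : ℕ) (hs : 0 < s) (hr : 0 < r) (hq : 0 < q)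
    (e1 : mapp g (List.replicate s Ltr.a ++ Ltr.b :: u) =
          mapp h (List.replicate s Ltr.a ++ Ltr.b :: u))
    (e2 : mapp g (List.replicate r Ltr.a ++ Ltr.b :: v) =
          mapp h (List.replicate q Ltr.a ++ Ltr.b :: v)) :
    s = r ∧ r = q :=
  stmt_16_general g h hg hh hgh u v s r q hs hr e1 e2
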